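/- For all R ≥ 0 and all symmetric d×d matrices A, B with |B^D| ≤ R, the variational inequality (P_R(A) − A, P_R(A) − B) ≤ 0 holds, where (·,·) is the Frobenius inner product. In other words, P_R is the metric projection onto the set {C ∈ S_d : |C^D| ≤ R}. -/

import Mathlib

open Matrix

variable {d : ℕ}

/-- Frobenius inner product of matrices. -/
def finner (A B : Matrix (Fin d) (Fin d) ℝ) : ℝ := ∑ i, ∑ j, A i j * B i j

/-- Frobenius norm. -/
noncomputable def fnorm (A : Matrix (Fin d) (Fin d) ℝ) : ℝ := Real.sqrt (finner A A)

/-- Deviatoric part `A - (tr A / d) • E_d`. -/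
noncomputable def dev (A : Matrix (Fin d) (Fin d) ℝ) : Matrix (Fin d) (Fin d) ℝ :=
  A - (Matrix.trace A / (d : ℝ)) • (1 : Matrix (Fin d) (Fin d) ℝ)

/-- The truncation map Φ. -/
noncomputable def Phi (A : Matrix (Fin d) (Fin d) ℝ) : Matrix (Fin d) (Fin d) ℝ :=
  if fnorm A ≤ 1 then A else (fnorm A)⁻¹ • A

/-- The projection-type map `P_R`. -/
noncomputable def Pop (R : ℝ) (A : Matrix (Fin d) (Fin d) ℝ) : Matrix (Fin d) (Fin d) ℝ :=
  if 0 < R then (Matrix.trace A / (d : ℝ)) • (1 : Matrix (Fin d) (Fin d) ℝ) + R • Phi (R⁻¹ • dev A)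
  else (Matrix.trace A / (d : ℝ)) • (1 : Matrix (Fin d) (Fin d) ℝ)

/-!
`P_R(A) = (tr A / d) E_d + s A^D` with either `s = 1` or `s ≤ 1` and `s |A^D| = R`, so
`P_R(A) - A = (s - 1) A^D` is deviatoric and hence orthogonal to `E_d`. The inequality thus reduces
to `(s - 1) (s a - b, a) ≤ 0` for `a = A^D`, `b = B^D`, where Cauchy–Schwarz gives
`(a, b) ≤ |a| R = s |a|²` in the truncated case.
-/

open RealInnerProductSpace

theorem real_inner_smul_sub_self_smul_sub_nonpos {E : Type*} [NormedAddCommGroup E]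
    [InnerProductSpace ℝ E] {a b : E} {s R : ℝ} (hb : ‖b‖ ≤ R) (hs : s ≤ 1)
    (hsa : s = 1 ∨ s * ‖a‖ = R) : ⟪s • a - a, s • a - b⟫ ≤ 0 := by
  rcases hsa with rfl | hsa
  · simp
  have hab : ⟪a, b⟫ ≤ s * ‖a‖ * ‖a‖ :=
    calc ⟪a, b⟫ ≤ ‖a‖ * ‖b‖ := real_inner_le_norm a b
      _ ≤ ‖a‖ * R := mul_le_mul_of_nonneg_left hb (norm_nonneg a)
      _ = s * ‖a‖ * ‖a‖ := by rw [← hsa]; ring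
  have hexpand : ⟪s • a - a, s • a - b⟫ = (s - 1) * (s * ‖a‖ * ‖a‖ - ⟪a, b⟫) := by
    rw [show s • a - a = (s - 1) • a by rw [sub_smul, one_smul], inner_smul_left,
      inner_sub_right, inner_smul_right, real_inner_self_eq_norm_mul_norm]
    simp only [conj_trivial]
    ring
  rw [hexpand]
  exact mul_nonpos_of_nonpos_of_nonneg (by linarith) (by linarith)

noncomputable def frobeniusEmbedding :
    Matrix (Fin d) (Fin d) ℝ →ₗ[ℝ] EuclideanSpace ℝ (Fin d × Fin d) where
  toFun A := WithLp.toLp 2 fun p => A p.1 p.2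
  map_add' _ _ := rfl
  map_smul' _ _ := rfl

theorem finner_eq_inner (A B : Matrix (Fin d) (Fin d) ℝ) :
    finner A B = ⟪frobeniusEmbedding A, frobeniusEmbedding B⟫ := by
  simp only [finner, PiLp.inner_apply, Fintype.sum_prod_type, RCLike.inner_apply, conj_trivial]
  exact Finset.sum_congr rfl fun i _ => Finset.sum_congr rfl fun j _ => mul_comm _ _

theorem fnorm_eq_norm (A : Matrix (Fin d) (Fin d) ℝ) : fnorm A = ‖frobeniusEmbedding A‖ := by
  rw [fnorm, finner_eq_inner, real_inner_self_eq_norm_mul_norm, Real.sqrt_mul_self (norm_nonneg _)]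

theorem fnorm_smul (c : ℝ) (A : Matrix (Fin d) (Fin d) ℝ) : fnorm (c • A) = |c| * fnorm A := by
  rw [fnorm_eq_norm, fnorm_eq_norm, map_smul, norm_smul, Real.norm_eq_abs]

theorem finner_one_right (A : Matrix (Fin d) (Fin d) ℝ) : finner A 1 = A.trace := by
  simp [finner, Matrix.one_apply, Matrix.trace]

theorem finner_add_right (A B C : Matrix (Fin d) (Fin d) ℝ) :
    finner A (B + C) = finner A B + finner A C := by
  simp only [finner_eq_inner, map_add, inner_add_right]

theorem finner_smul_right (c : ℝ) (A B : Matrix (Fin d) (Fin d) ℝ) :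
    finner A (c • B) = c * finner A B := by
  simp only [finner_eq_inner, map_smul, real_inner_smul_right]

-- For `d = 0` the division is junk, but the trace of an empty matrix vanishes anyway.
theorem trace_dev (A : Matrix (Fin d) (Fin d) ℝ) : (dev A).trace = 0 := by
  rcases Nat.eq_zero_or_pos d with rfl | hd
  · simp [Matrix.trace]
  · simp [dev, Matrix.trace_sub, Matrix.trace_smul, hd.ne']

theorem Pop_eq_smul_one_add_smul_dev {R : ℝ} (hR : 0 ≤ R) (A : Matrix (Fin d) (Fin d) ℝ) :
    ∃ s ≤ 1, (s = 1 ∨ s * fnorm (dev A) = R) ∧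
      Pop R A = (A.trace / d) • (1 : Matrix (Fin d) (Fin d) ℝ) + s • dev A := by
  rcases hR.eq_or_lt with rfl | hR
  · exact ⟨0, zero_le_one, .inr (zero_mul _), by simp [Pop]⟩
  have hnorm : fnorm (R⁻¹ • dev A) = R⁻¹ * fnorm (dev A) := by
    rw [fnorm_smul, abs_of_pos (inv_pos.mpr hR)]
  by_cases hsmall : fnorm (R⁻¹ • dev A) ≤ 1
  · refine ⟨1, le_rfl, .inl rfl, ?_⟩
    rw [Pop, if_pos hR, Phi, if_pos hsmall, smul_smul, mul_inv_cancel₀ hR.ne']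
  have hlarge : R < fnorm (dev A) := by
    rw [hnorm, not_le, inv_mul_eq_div, one_lt_div hR] at hsmall
    exact hsmall
  have hpos : 0 < fnorm (dev A) := hR.trans hlarge
  refine ⟨R / fnorm (dev A), (div_le_one hpos).mpr hlarge.le,
    .inr (div_mul_cancel₀ R hpos.ne'), ?_⟩
  rw [Pop, if_pos hR, Phi, if_neg hsmall, hnorm, smul_smul, smul_smul]
  congr 2
  field_simp

theorem stmt_4_general (R : ℝ)
    (A B : Matrix (Fin d) (Fin d) ℝ)
    (hBD : fnorm (dev B) ≤ R) :
    finner (Pop R A - A) (Pop R A - B) ≤ 0 := by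
  have hR : 0 ≤ R := (Real.sqrt_nonneg _).trans hBD
  obtain ⟨s, hs, hsA, hPop⟩ := Pop_eq_smul_one_add_smul_dev hR A
  have hX : Pop R A - A = s • dev A - dev A := by rw [hPop, dev]; abel
  have hY : Pop R A - B =
      (s • dev A - dev B) + ((A.trace - B.trace) / d) • (1 : Matrix (Fin d) (Fin d) ℝ) := by
    rw [hPop, dev, dev]; module
  have horth : finner (s • dev A - dev A) 1 = 0 := by
    rw [finner_one_right, Matrix.trace_sub, Matrix.trace_smul, trace_dev, smul_zero, sub_zero]
  rw [hX, hY, finner_add_right, finner_smul_right, horth, mul_zero, add_zero, finner_eq_inner,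
    map_sub, map_smul]
  rw [fnorm_eq_norm] at hBD hsA
  exact real_inner_smul_sub_self_smul_sub_nonpos hBD hs hsA

theorem stmt_4 (hd : 2 ≤ d) (R : ℝ) (hR : 0 ≤ R)
    (A B : Matrix (Fin d) (Fin d) ℝ) (hA : A.IsSymm) (hB : B.IsSymm)
    (hBD : fnorm (dev B) ≤ R) :
    finner (Pop R A - A) (Pop R A - B) ≤ 0 :=
  stmt_4_general R A B hBD
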